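/- arXiv:2004.10900 — 3 statements merged into one kernel-verified Lean document; each statement's English description precedes it below -/
import Mathlib

section
/- Let 𝒟_1, 𝒟_2 be generalized derivations of degree 1 on a vector bundle E, with duals 𝒟_1^⊤, 𝒟_2^⊤ on E*. Then the dual of the graded bracket equals the bracket of the duals: [𝒟_1, 𝒟_2]^⊤ = [𝒟_1^⊤, 𝒟_2^⊤]. In particular, dualization 𝒟 ↦ 𝒟^⊤ preserves the graded Lie bracket of generalized derivations. -/
/-- Vector fields on `M`, modeled as derivations of `R = C^∞(M)`. -/
abbrev VectorField (R : Type*) [CommRing R] [Algebra ℝ R] := Derivation ℝ R R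

variable {R : Type*} [CommRing R] [Algebra ℝ R]

/-- Frölicher–Nijenhuis bracket of two `(1,1)`-tensors `r₁, r₂` (a vector-valued 2-form). -/
def fnBracket (r₁ r₂ : VectorField R → VectorField R) (X Y : VectorField R) : VectorField R :=
  ⁅r₁ X, r₂ Y⁆ + ⁅r₂ X, r₁ Y⁆ - r₁ ⁅r₂ X, Y⁆ - r₁ ⁅X, r₂ Y⁆ - r₂ ⁅r₁ X, Y⁆ - r₂ ⁅X, r₁ Y⁆
    + r₁ (r₂ ⁅X, Y⁆) + r₂ (r₁ ⁅X, Y⁆)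

/-- Extension of a degree-1 generalized derivation `(D, l, r)` on `F` to `F`-valued
1-forms `η`, producing an `F`-valued 2-form (formula `D(α⊗u) = α∧D(u) − dα∧l(u) + L_r α⊗u`
written invariantly). -/
def Dext {F : Type*} [AddCommGroup F] (D : VectorField R → F → F) (l : F → F)
    (r : VectorField R → VectorField R) (η : VectorField R → F) (X Y : VectorField R) : F :=
  - D X (η Y) + D Y (η X) + l (η ⁅X, Y⁆) - η ⁅r X, Y⁆ - η ⁅X, r Y⁆ + η (r ⁅X, Y⁆)

/-- `D`-component of the bracket `[𝒟₁, 𝒟₂]` of two degree-1 generalized derivations: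
`D = D₂∘D₁ + D₁∘D₂` (using the extensions of `D₁, D₂` to 1-forms). -/
def bracketD {F : Type*} [AddCommGroup F] (D₁ D₂ : VectorField R → F → F) (l₁ l₂ : F → F)
    (r₁ r₂ : VectorField R → VectorField R) (X Y : VectorField R) (u : F) : F :=
  Dext D₂ l₂ r₂ (fun Z => D₁ Z u) X Y + Dext D₁ l₁ r₁ (fun Z => D₂ Z u) X Y

/-- `l`-component of the bracket `[𝒟₁, 𝒟₂]`: `l = [D₂, l₁] + [D₁, l₂]` on sections. -/
def bracketL {F : Type*} [AddCommGroup F] (D₁ D₂ : VectorField R → F → F) (l₁ l₂ : F → F)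
    (X : VectorField R) (u : F) : F :=
  D₂ X (l₁ u) - l₁ (D₂ X u) + D₁ X (l₂ u) - l₂ (D₁ X u)

/-- `D`-component of the dual `𝒟^⊤` of a degree-1 generalized derivation, acting on
sections `μ` of `E*` (modeled as functions `E → R`). -/
def dualD {E : Type*} [AddCommGroup E] [Module R E] (D : VectorField R → E → E) (l : E → E)
    (r : VectorField R → VectorField R) (X : VectorField R) (μ : E → R) : E → R :=
  fun u => X (μ (l u)) - (r X) (μ u) - μ (D X u)

/-- Fiberwise transpose `l*` acting on sections of `E*`. -/
def dualL {E : Type*} [AddCommGroup E] [Module R E] (l : E → E) (μ : E → R) : E → R :=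
  fun u => μ (l u)

/-- for degree-1 generalized derivations `𝒟₁ = (D₁,l₁,r₁)`, `𝒟₂ = (D₂,l₂,r₂)`
on `E`, the dual of the bracket equals the bracket of the duals, `[𝒟₁,𝒟₂]^⊤ = [𝒟₁^⊤,𝒟₂^⊤]`:
the `D`-components (first conjunct, comparing the degree-2 dualization of the bracket with
the bracket of the duals) and the `l`-components (second conjunct) agree; the `r`-components
are both `[r₁,r₂]` by definition. Hence dualization preserves the graded Lie bracket. -/
theorem dual_of_bracket_eq_bracket_of_duals
    {E : Type*} [AddCommGroup E] [Module R E]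
    (D₁ D₂ : VectorField R → E → E) (l₁ l₂ : E →ₗ[R] E)
    (r₁ r₂ : VectorField R →ₗ[R] VectorField R)
    (h₁ : ∀ (X : VectorField R) (f : R) (u : E),
      D₁ X (f • u) = f • D₁ X u + (X f) • l₁ u - (r₁ X f) • u)
    (h₂ : ∀ (X : VectorField R) (f : R) (u : E),
      D₂ X (f • u) = f • D₂ X u + (X f) • l₂ u - (r₂ X f) • u)
    (ha₁ : ∀ (X : VectorField R) (u v : E), D₁ X (u + v) = D₁ X u + D₁ X v)
    (ha₂ : ∀ (X : VectorField R) (u v : E), D₂ X (u + v) = D₂ X u + D₂ X v) :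
    (∀ (X Y : VectorField R) (μ : Module.Dual R E) (u : E),
      X (μ (bracketL D₁ D₂ ⇑l₁ ⇑l₂ Y u)) - Y (μ (bracketL D₁ D₂ ⇑l₁ ⇑l₂ X u))
          - μ (bracketL D₁ D₂ ⇑l₁ ⇑l₂ ⁅X, Y⁆ u)
          - (fnBracket ⇑r₁ ⇑r₂ X Y) (μ u)
          - μ (bracketD D₁ D₂ ⇑l₁ ⇑l₂ ⇑r₁ ⇑r₂ X Y u)
        = bracketD (dualD D₁ ⇑l₁ ⇑r₁) (dualD D₂ ⇑l₂ ⇑r₂)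
            (dualL (R := R) ⇑l₁) (dualL (R := R) ⇑l₂) ⇑r₁ ⇑r₂ X Y ⇑μ u) ∧
    (∀ (X : VectorField R) (μ : Module.Dual R E) (u : E),
      μ (bracketL D₁ D₂ ⇑l₁ ⇑l₂ X u)
        = bracketL (dualD D₁ ⇑l₁ ⇑r₁) (dualD D₂ ⇑l₂ ⇑r₂)
            (dualL (R := R) ⇑l₁) (dualL (R := R) ⇑l₂) X ⇑μ u) := by
  constructor
  · intro X Y μ u
    simp only [bracketD, bracketL, Dext, dualD, dualL, fnBracket, map_add, map_sub, map_neg,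
      Derivation.commutator_apply, Derivation.add_apply, Derivation.sub_apply, Pi.add_apply, Pi.sub_apply, Pi.neg_apply]
    ring
  · intro X μ u
    simp only [bracketL, dualD, dualL, map_add, map_sub, map_neg, Pi.add_apply, Pi.sub_apply, Pi.neg_apply]
    ring
end

section
/- Let (A,[·,·],ρ) be a Lie algebroid over M and θ: TM → A a vector bundle map. Define D^θ_X(a) = [a, θ(X)] − θ([ρ(a), X]), l = θ∘ρ, r = ρ∘θ. Then (D^θ, l, r) is a generalized derivation of degree 1 on A satisfying the IM equations: (IM1) D_X([a,b]) = [a, D_X(b)] − [b, D_X(a)] + D_{[ρ(b),X]}(a) − D_{[ρ(a),X]}(b); (IM2) l([a,b]) = [a, l(b)] − D_{ρ(b)}(a); (IM3) r([ρ(a),X]) = [ρ(a), r(X)] − ρ(D_X(a)); (IM4) r∘ρ = ρ∘l. -/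
/-- A Lie algebroid over `M`, modeled on the `C^∞(M) = R`-module `A` of its sections:
a Lie bracket on sections and a `C^∞(M)`-linear anchor `ρ : A → TM` satisfying the
Leibniz rule, with `ρ` a morphism of brackets. -/
structure Algebroid (R : Type*) [CommRing R] [Algebra ℝ R]
    (A : Type*) [AddCommGroup A] [Module R A] where
  br : A → A → A
  ρ : A →ₗ[R] VectorField R
  add_left : ∀ a b c, br (a + b) c = br a c + br b c
  add_right : ∀ a b c, br a (b + c) = br a b + br a c
  skew : ∀ a b, br a b = - br b a
  jacobi : ∀ a b c, br a (br b c) = br (br a b) c + br b (br a c)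
  leibniz : ∀ a b (f : R), br a (f • b) = f • br a b + (ρ a f) • b
  anchor_br : ∀ a b, ρ (br a b) = ⁅ρ a, ρ b⁆

variable {R : Type*} [CommRing R] [Algebra ℝ R]
variable {A : Type*} [AddCommGroup A] [Module R A]

/-- `D^θ_X(a) = [a, θ(X)] − θ([ρ(a), X])`. -/
def Dtheta (𝔄 : Algebroid R A) (θ : VectorField R →ₗ[R] A)
    (X : VectorField R) (a : A) : A :=
  𝔄.br a (θ X) - θ ⁅𝔄.ρ a, X⁆

lemma smul_lie_vf {R : Type*} [CommRing R] [Algebra ℝ R] (f : R) (D E : VectorField R) :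
    ⁅f • D, E⁆ = f • ⁅D, E⁆ - (E f) • D := by
  ext g
  simp only [Derivation.commutator_apply, Derivation.smul_apply, Derivation.sub_apply,
    smul_eq_mul, Derivation.leibniz]
  ring

section
variable {R : Type*} [CommRing R] [Algebra ℝ R]
variable {A : Type*} [AddCommGroup A] [Module R A]

lemma br_zero_right (𝔄 : Algebroid R A) (x : A) : 𝔄.br x 0 = 0 := by
  have := 𝔄.add_right x 0 0
  simp at this
  linear_combination (norm := abel) this

lemma br_neg_right (𝔄 : Algebroid R A) (x y : A) : 𝔄.br x (-y) = - 𝔄.br x y := by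
  have := 𝔄.add_right x y (-y)
  simp [br_zero_right] at this
  exact eq_neg_of_add_eq_zero_right this.symm

lemma br_sub_right (𝔄 : Algebroid R A) (x y z : A) :
    𝔄.br x (y - z) = 𝔄.br x y - 𝔄.br x z := by
  rw [sub_eq_add_neg, 𝔄.add_right, br_neg_right]; abel

lemma br_smul_left (𝔄 : Algebroid R A) (f : R) (x y : A) :
    𝔄.br (f • x) y = f • 𝔄.br x y - ((𝔄.ρ y) f) • x := by
  rw [𝔄.skew, 𝔄.leibniz, 𝔄.skew x y, smul_neg]
  abel

end

/-- for a Lie algebroid `(A, [·,·], ρ)` and a bundle map `θ : TM → A`, the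
triple `(D^θ, l, r)` with `D^θ_X(a) = [a, θ(X)] − θ([ρ(a), X])`, `l = θ∘ρ`, `r = ρ∘θ`
is a generalized derivation of degree 1 on `A` satisfying the IM equations (IM1)–(IM4). -/
theorem Dtheta_is_IM_tensor (𝔄 : Algebroid R A) (θ : VectorField R →ₗ[R] A) :
    -- Leibniz equation: (D^θ, θ∘ρ, ρ∘θ) is a generalized derivation of degree 1
    (∀ (X : VectorField R) (f : R) (a : A),
      Dtheta 𝔄 θ X (f • a)
        = f • Dtheta 𝔄 θ X a + (X f) • θ (𝔄.ρ a) - ((𝔄.ρ (θ X)) f) • a) ∧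
    -- (IM1)
    (∀ (X : VectorField R) (a b : A),
      Dtheta 𝔄 θ X (𝔄.br a b)
        = 𝔄.br a (Dtheta 𝔄 θ X b) - 𝔄.br b (Dtheta 𝔄 θ X a)
          + Dtheta 𝔄 θ ⁅𝔄.ρ b, X⁆ a - Dtheta 𝔄 θ ⁅𝔄.ρ a, X⁆ b) ∧
    -- (IM2)
    (∀ (a b : A),
      θ (𝔄.ρ (𝔄.br a b)) = 𝔄.br a (θ (𝔄.ρ b)) - Dtheta 𝔄 θ (𝔄.ρ b) a) ∧
    -- (IM3)
    (∀ (a : A) (X : VectorField R),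
      𝔄.ρ (θ ⁅𝔄.ρ a, X⁆) = ⁅𝔄.ρ a, 𝔄.ρ (θ X)⁆ - 𝔄.ρ (Dtheta 𝔄 θ X a)) ∧
    -- (IM4)
    (∀ a : A, 𝔄.ρ (θ (𝔄.ρ a)) = 𝔄.ρ (θ (𝔄.ρ a))) := by
  refine ⟨?_, ?_, ?_, ?_, fun a => rfl⟩
  · intro X f a
    have h2 : ⁅𝔄.ρ (f • a), X⁆ = f • ⁅𝔄.ρ a, X⁆ - (X f) • 𝔄.ρ a := by
      rw [map_smul, smul_lie_vf]
    simp only [Dtheta]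
    rw [br_smul_left, h2]
    simp only [map_sub, map_smul, smul_sub]
    abel
  · intro X a b
    have hjac : 𝔄.br (𝔄.br a b) (θ X)
        = 𝔄.br a (𝔄.br b (θ X)) - 𝔄.br b (𝔄.br a (θ X)) := by
      rw [𝔄.jacobi a b (θ X)]; abel
    have hlie : ⁅𝔄.ρ (𝔄.br a b), X⁆
        = ⁅𝔄.ρ a, ⁅𝔄.ρ b, X⁆⁆ - ⁅𝔄.ρ b, ⁅𝔄.ρ a, X⁆⁆ := by
      rw [𝔄.anchor_br, lie_lie]
    simp only [Dtheta, hjac, hlie, map_sub, br_sub_right]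
    abel
  · intro a b
    simp only [Dtheta, 𝔄.anchor_br]
    abel
  · intro a X
    simp only [Dtheta, map_sub, 𝔄.anchor_br]
    abel
end

section
/- Let (A,[·,·],ρ) be a Lie algebroid and 𝒟 = (D,l,r) an IM (1,1)-tensor on A with [𝒟,𝒟] = 0 (in particular l(D_X(a)) = D_X(l(a)) for all X, a). Then the Nijenhuis torsion of l vanishes: [l(a), l(b)] − l([l(a),b] + [a,l(b)] − l([a,b])) = 0 for all a, b ∈ Γ(A). Consequently the deformed bracket [a,b]_l = [l(a),b] + [a,l(b)] − l([a,b]) together with anchor ρ∘l defines a Lie algebroid structure on A. -/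
variable {R : Type*} [CommRing R] [Algebra ℝ R] {A : Type*} [AddCommGroup A] [Module R A]

/-- The deformed bracket `[a,b]_l = [l(a),b] + [a,l(b)] − l([a,b])`. -/
def defBr (𝔄 : Algebroid R A) (l : A →ₗ[R] A) (a b : A) : A :=
  𝔄.br (l a) b + 𝔄.br a (l b) - l (𝔄.br a b)

/-- let `𝒟 = (D,l,r)` be an IM (1,1)-tensor on a Lie algebroid `A` with
`[𝒟,𝒟] = 0` (in particular `l(D_X(a)) = D_X(l(a))`).  Then the Nijenhuis torsion of `l`
vanishes, and the deformed bracket `[·,·]_l` with anchor `ρ∘l` is a Lie algebroid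
structure on `A` (skew, Jacobi, Leibniz). -/
theorem IM_tensor_gives_deformed_algebroid
    (𝔄 : Algebroid R A) (D : VectorField R → A → A) (l : A →ₗ[R] A)
    (r : VectorField R → VectorField R)
    (hLeibniz : ∀ (X : VectorField R) (f : R) (a : A),
      D X (f • a) = f • D X a + (X f) • l a - (r X f) • a)
    (hIM1 : ∀ (X : VectorField R) (a b : A),
      D X (𝔄.br a b)
        = 𝔄.br a (D X b) - 𝔄.br b (D X a) + D ⁅𝔄.ρ b, X⁆ a - D ⁅𝔄.ρ a, X⁆ b)
    (hIM2 : ∀ a b : A, l (𝔄.br a b) = 𝔄.br a (l b) - D (𝔄.ρ b) a)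
    (hIM3 : ∀ (a : A) (X : VectorField R),
      r ⁅𝔄.ρ a, X⁆ = ⁅𝔄.ρ a, r X⁆ - 𝔄.ρ (D X a))
    (hIM4 : ∀ a : A, r (𝔄.ρ a) = 𝔄.ρ (l a))
    (hcomm : ∀ (X : VectorField R) (a : A), l (D X a) = D X (l a)) :
    -- the Nijenhuis torsion of l vanishes
    (∀ a b : A, 𝔄.br (l a) (l b) - l (defBr 𝔄 l a b) = 0) ∧
    -- [·,·]_l is skew-symmetric,
    (∀ a b : A, defBr 𝔄 l a b = - defBr 𝔄 l b a) ∧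
    -- satisfies the Jacobi identity,
    (∀ a b c : A, defBr 𝔄 l a (defBr 𝔄 l b c)
      = defBr 𝔄 l (defBr 𝔄 l a b) c + defBr 𝔄 l b (defBr 𝔄 l a c)) ∧
    -- and the Leibniz rule with anchor ρ∘l
    (∀ (a b : A) (f : R),
      defBr 𝔄 l a (f • b) = f • defBr 𝔄 l a b + ((𝔄.ρ (l a)) f) • b) := by
  -- basic bracket lemmas
  have brz : ∀ a : A, 𝔄.br a (0 : A) = 0 := by
    intro a
    have h := 𝔄.add_right a 0 0
    rw [add_zero] at h
    exact (left_eq_add.mp h)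
  have brnegr : ∀ a b : A, 𝔄.br a (-b) = - 𝔄.br a b := by
    intro a b
    have h := 𝔄.add_right a b (-b)
    rw [add_neg_cancel, brz] at h
    exact (eq_neg_of_add_eq_zero_right h.symm)
  have brsubr : ∀ a b c : A, 𝔄.br a (b - c) = 𝔄.br a b - 𝔄.br a c := by
    intro a b c
    rw [sub_eq_add_neg, 𝔄.add_right, brnegr, ← sub_eq_add_neg]
  have brsubl : ∀ a b c : A, 𝔄.br (a - b) c = 𝔄.br a c - 𝔄.br b c := by
    intro a b c
    rw [𝔄.skew, brsubr, 𝔄.skew a c, 𝔄.skew b c]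
    abel
  -- the key consequence of (IM2) and [D,D]=0 : l is "multiplicative up to defBr"
  have hN : ∀ a b : A, l (defBr 𝔄 l a b) = 𝔄.br (l a) (l b) := by
    intro a b
    have h1 := hIM2 (l a) b
    have h2 := hIM2 a (l b)
    have h3 : l (l (𝔄.br a b))
        = 𝔄.br a (l (l b)) - D (𝔄.ρ (l b)) a - D (𝔄.ρ b) (l a) := by
      rw [hIM2 a b, map_sub, hIM2 a (l b), hcomm]
    simp only [defBr, map_add, map_sub, h1, h2, h3]
    abel
  have hN' : ∀ u v : A, 𝔄.br (l u) (l v)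
      = l (𝔄.br (l u) v) + l (𝔄.br u (l v)) - l (l (𝔄.br u v)) := by
    intro u v
    simpa only [defBr, map_add, map_sub] using (hN u v).symm
  refine ⟨?_, ?_, ?_, ?_⟩
  · intro a b
    rw [hN]
    abel
  · intro a b
    simp only [defBr]
    rw [𝔄.skew (l a) b, 𝔄.skew a (l b), 𝔄.skew a b, map_neg]
    abel
  · intro a b c
    have e1 : defBr 𝔄 l a (defBr 𝔄 l b c)
        = 𝔄.br (l a) (𝔄.br (l b) c) + 𝔄.br (l a) (𝔄.br b (l c))
            - 𝔄.br (l a) (l (𝔄.br b c))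
          + 𝔄.br a (𝔄.br (l b) (l c))
          - l (𝔄.br a (𝔄.br (l b) c)) - l (𝔄.br a (𝔄.br b (l c)))
          + l (𝔄.br a (l (𝔄.br b c))) := by
      show 𝔄.br (l a) (defBr 𝔄 l b c) + 𝔄.br a (l (defBr 𝔄 l b c))
          - l (𝔄.br a (defBr 𝔄 l b c)) = _
      rw [hN b c]
      simp only [defBr, 𝔄.add_left, 𝔄.add_right, brsubl, brsubr, map_add, map_sub]
      abel
    have e2 : defBr 𝔄 l (defBr 𝔄 l a b) c
        = 𝔄.br (𝔄.br (l a) (l b)) c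
          + 𝔄.br (𝔄.br (l a) b) (l c) + 𝔄.br (𝔄.br a (l b)) (l c)
            - 𝔄.br (l (𝔄.br a b)) (l c)
          - l (𝔄.br (𝔄.br (l a) b) c) - l (𝔄.br (𝔄.br a (l b)) c)
          + l (𝔄.br (l (𝔄.br a b)) c) := by
      show 𝔄.br (l (defBr 𝔄 l a b)) c + 𝔄.br (defBr 𝔄 l a b) (l c)
          - l (𝔄.br (defBr 𝔄 l a b) c) = _
      rw [hN a b]
      simp only [defBr, 𝔄.add_left, 𝔄.add_right, brsubl, brsubr, map_add, map_sub]
      abel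
    have e3 : defBr 𝔄 l b (defBr 𝔄 l a c)
        = 𝔄.br (l b) (𝔄.br (l a) c) + 𝔄.br (l b) (𝔄.br a (l c))
            - 𝔄.br (l b) (l (𝔄.br a c))
          + 𝔄.br b (𝔄.br (l a) (l c))
          - l (𝔄.br b (𝔄.br (l a) c)) - l (𝔄.br b (𝔄.br a (l c)))
          + l (𝔄.br b (l (𝔄.br a c))) := by
      show 𝔄.br (l b) (defBr 𝔄 l a c) + 𝔄.br b (l (defBr 𝔄 l a c))
          - l (𝔄.br b (defBr 𝔄 l a c)) = _
      rw [hN a c]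
      simp only [defBr, 𝔄.add_left, 𝔄.add_right, brsubl, brsubr, map_add, map_sub]
      abel
    rw [e1, e2, e3]
    rw [hN' a (𝔄.br b c), hN' (𝔄.br a b) c, hN' b (𝔄.br a c)]
    rw [𝔄.jacobi (l a) (l b) c, 𝔄.jacobi (l a) b (l c), 𝔄.jacobi a (l b) (l c),
      𝔄.jacobi a (l b) c, 𝔄.jacobi a b (l c), 𝔄.jacobi (l a) b c, 𝔄.jacobi a b c]
    simp only [map_add, map_sub]
    abel
  · intro a b f
    simp only [defBr, map_smul, 𝔄.leibniz, map_add, smul_add, smul_sub]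
    abel
end
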